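/- arXiv:2507.02421 — 2 statements merged into one kernel-verified Lean document; each statement's English description precedes it below -/
import Mathlib

section
/- Let (G, L_G) and (H, L_H) be grafts. If (H, L_H) is a local complementation minor of (G, L_G), i.e. (H, L_H) is obtained from (G, L_G) by a finite sequence of local complementation deletion operations, each performed at a vertex belonging to the current mark set, then the corank over GF(2) of A_{(G,L_G)} equals the corank over GF(2) of A_{(H,L_H)}. -/
open scoped Classical symmDiff

/-- Local complementation of a simple graph at a vertex `v`: toggle the adjacency
between every pair of distinct neighbours of `v`. -/
def SimpleGraph.localComp {V : Type*} (G : SimpleGraph V) (v : V) : SimpleGraph V where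
  Adj u w := u ≠ w ∧ (Xor' (G.Adj u w) (G.Adj v u ∧ G.Adj v w))
  symm := ⟨by
    rintro u w ⟨h1, h2⟩
    refine ⟨h1.symm, ?_⟩
    rw [G.adj_comm w u, and_comm]
    exact h2⟩
  loopless := ⟨fun u h => h.1 rfl⟩

/-- Local complementation deletion `G ⊟ v`, keeping the ambient vertex type
(the deleted vertex becomes isolated). -/
def SimpleGraph.lcdel {V : Type*} (G : SimpleGraph V) (v : V) : SimpleGraph V where
  Adj u w := u ≠ v ∧ w ≠ v ∧ (G.localComp v).Adj u w
  symm := ⟨fun u w h => ⟨h.2.1, h.1, (G.localComp v).adj_symm h.2.2⟩⟩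
  loopless := ⟨fun u h => (G.localComp v).loopless.irrefl u h.2.2⟩

/-- A graft: a simple graph whose edges lie inside a finite support, together with
a marked set of vertices `L ⊆ support`. -/
structure Graft (V : Type*) where
  support : Finset V
  G : SimpleGraph V
  edge_mem : ∀ ⦃u w : V⦄, G.Adj u w → u ∈ support
  L : Finset V
  L_sub : L ⊆ support

variable {V : Type*} [Fintype V] [DecidableEq V]

/-- Local complementation deletion of a graft at a vertex:
`(G, L) ⊟ v = (G ⊟ v, (L \ {v}) ∆ N_G(v))`. -/
noncomputable def Graft.lcd (Γ : Graft V) (v : V) : Graft V where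
  support := Γ.support.erase v
  G := Γ.G.lcdel v
  edge_mem := by
    intro u w h
    obtain ⟨hu, hw, hne, hx⟩ := h
    refine Finset.mem_erase.mpr ⟨hu, ?_⟩
    rcases (hx : (Γ.G.Adj u w ∧ ¬(Γ.G.Adj v u ∧ Γ.G.Adj v w)) ∨
        ((Γ.G.Adj v u ∧ Γ.G.Adj v w) ∧ ¬Γ.G.Adj u w)) with ⟨ha, -⟩ | ⟨⟨hv1, -⟩, -⟩
    · exact Γ.edge_mem ha
    · exact Γ.edge_mem (Γ.G.adj_symm hv1)
  L := (Γ.L.erase v) ∆ (Finset.univ.filter fun u => Γ.G.Adj v u)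
  L_sub := by
    intro u hu
    rw [Finset.mem_symmDiff] at hu
    refine Finset.mem_erase.mpr ?_
    rcases hu with ⟨h1, -⟩ | ⟨h2, -⟩
    · exact ⟨(Finset.mem_erase.mp h1).1, Γ.L_sub (Finset.mem_erase.mp h1).2⟩
    · have hadj : Γ.G.Adj v u := (Finset.mem_filter.mp h2).2
      exact ⟨fun h => Γ.G.loopless.irrefl v (h ▸ hadj), Γ.edge_mem (Γ.G.adj_symm hadj)⟩

/-- `Δ` is a local complementation minor of `Γ`: it is obtained from `Γ` by a
finite sequence of local complementation deletions, each performed at a vertex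
of the current mark set. -/
inductive Graft.IsLCMinor : Graft V → Graft V → Prop
  | refl (Γ : Graft V) : Graft.IsLCMinor Γ Γ
  | step {Γ Δ : Graft V} (v : V) (hv : v ∈ Γ.L) :
      Graft.IsLCMinor (Γ.lcd v) Δ → Graft.IsLCMinor Γ Δ

/-- The adjacency matrix over GF(2) of a graft, indexed by its support. -/
noncomputable def Graft.matrix (Γ : Graft V) :
    Matrix Γ.support Γ.support (ZMod 2) := fun u w =>
  if (u : V) = (w : V) then (if (u : V) ∈ Γ.L then 1 else 0)
  else (if Γ.G.Adj (u : V) (w : V) then 1 else 0)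

/-- The corank over GF(2) of the adjacency matrix of a graft. -/
noncomputable def Graft.corank (Γ : Graft V) : ℕ :=
  Γ.support.card - Γ.matrix.rank

/-!
Order the support with the marked vertex `v` first. Since `v ∈ L`, the adjacency matrix then has
the block form `[[1, b], [c, D]]`, so its rank is `1 + rank (D - c * b)`. Over GF(2) the Schur
complement `D - c * b` is exactly the adjacency matrix of `(G, L) ⊟ v`: an off-diagonal entry
`(u, w)` is toggled iff `u` and `w` are both neighbours of `v`, and a diagonal entry `(u, u)` iff
`u` is a neighbour of `v`. Each deletion thus lowers both the rank and the number of vertices by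
one, and the corank is invariant along any sequence of deletions.
-/

namespace Submodule

variable {R M N : Type*} [Semiring R] [AddCommMonoid M] [AddCommMonoid N] [Module R M] [Module R N]

def prodEquiv (p : Submodule R M) (q : Submodule R N) : p.prod q ≃ₗ[R] p × q where
  toFun x := (⟨x.1.1, x.2.1⟩, ⟨x.1.2, x.2.2⟩)
  invFun y := ⟨(y.1.1, y.2.1), ⟨y.1.2, y.2.2⟩⟩
  left_inv _ := rfl
  right_inv _ := rfl
  map_add' _ _ := rfl
  map_smul' _ _ := rfl

end Submodule

namespace Matrix

variable {K : Type*} [Field K]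

theorem rank_fromBlocks_zero_zero {l m n o : Type*} [Fintype l] [Fintype m] [Fintype n]
    [Fintype o] (A : Matrix m l K) (D : Matrix n o K) :
    (fromBlocks A 0 0 D).rank = A.rank + D.rank := by
  let e₁ := LinearEquiv.sumArrowLequivProdArrow l o K K
  let e₂ := LinearEquiv.sumArrowLequivProdArrow m n K K
  have h : (fromBlocks A 0 0 D).mulVecLin
      = e₂.symm.toLinearMap ∘ₗ (A.mulVecLin.prodMap D.mulVecLin) ∘ₗ e₁.toLinearMap := by
    refine LinearMap.ext fun x => funext fun i => ?_
    rcases i with i | i <;>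
      simp only [e₁, e₂, mulVecBilin_apply, fromBlocks_mulVec, zero_mulVec, add_zero, zero_add,
        LinearMap.coe_comp, LinearEquiv.coe_coe, Function.comp_apply, LinearMap.prodMap_apply,
        LinearEquiv.sumArrowLequivProdArrow_symm_apply_inl,
        LinearEquiv.sumArrowLequivProdArrow_symm_apply_inr] <;> rfl
  rw [rank, h, LinearMap.range_comp, LinearMap.range_comp_of_range_eq_top _ e₁.range,
    LinearMap.range_prodMap, LinearEquiv.finrank_map_eq,
    (Submodule.prodEquiv _ _).finrank_eq, Module.finrank_prod]
  rfl

theorem rank_fromBlocks_of_invertible₁₁ {m n : Type*} [Fintype m] [Fintype n] [DecidableEq m]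
    [DecidableEq n] (A : Matrix m m K) (B : Matrix m n K) (C : Matrix n m K) (D : Matrix n n K)
    [Invertible A] :
    (fromBlocks A B C D).rank = Fintype.card m + (D - C * ⅟A * B).rank := by
  rw [fromBlocks_eq_of_invertible₁₁,
    rank_mul_eq_left_of_isUnit_det _ _ (by simp),
    rank_mul_eq_right_of_isUnit_det _ _ (by simp),
    rank_fromBlocks_zero_zero, rank_of_isUnit A (isUnit_of_invertible A)]

theorem rank_eq_rank_pivot_add_one {ι κ : Type*} [Fintype ι] [Fintype κ] [DecidableEq κ]
    (M : Matrix ι ι K) (e : Unit ⊕ κ ≃ ι) (h : M (e (.inl ())) (e (.inl ())) = 1) :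
    M.rank = (of fun j k => M (e (.inr j)) (e (.inr k)) -
      M (e (.inr j)) (e (.inl ())) * M (e (.inl ())) (e (.inr k))).rank + 1 := by
  have h₁₁ : (M.submatrix e e).toBlocks₁₁ = 1 := by
    ext ⟨⟩ ⟨⟩
    exact h
  let _ : Invertible (M.submatrix e e).toBlocks₁₁ := h₁₁ ▸ invertibleOne
  rw [← rank_submatrix M e e, ← fromBlocks_toBlocks (M.submatrix e e),
    rank_fromBlocks_of_invertible₁₁, Fintype.card_unit, add_comm]
  congr 2
  ext j k
  simp [h₁₁, mul_apply, toBlocks₁₂, toBlocks₂₁, toBlocks₂₂]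

end Matrix

def Finset.sumEraseEquiv {α : Type*} [DecidableEq α] {s : Finset α} {a : α} (ha : a ∈ s) :
    Unit ⊕ s.erase a ≃ s where
  toFun := Sum.elim (fun _ => ⟨a, ha⟩) fun x => ⟨x, Finset.mem_of_mem_erase x.2⟩
  invFun x := if h : x.1 = a then .inl () else .inr ⟨x, Finset.mem_erase.2 ⟨h, x.2⟩⟩
  left_inv := by
    rintro (⟨⟩ | ⟨x, hx⟩)
    · simp
    · simp [Finset.ne_of_mem_erase hx]
  right_inv x := by
    by_cases h : x.1 = a
    · simp only [h, ↓reduceDIte, Sum.elim_inl]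
      exact Subtype.ext h.symm
    · simp only [h, ↓reduceDIte, Sum.elim_inr, Subtype.coe_eta]

theorem SimpleGraph.lcdel_adj {W : Type*} (G : SimpleGraph W) {v u w : W} :
    (G.lcdel v).Adj u w ↔ u ≠ v ∧ w ≠ v ∧ u ≠ w ∧ Xor (G.Adj u w) (G.Adj v u ∧ G.Adj v w) :=
  Iff.rfl

namespace Graft

theorem matrix_lcd_apply (Γ : Graft V) {v : V} (hv : v ∈ Γ.support)
    (u w : Γ.support.erase v) :
    (Γ.lcd v).matrix u w =
      Γ.matrix ⟨u, Finset.mem_of_mem_erase u.2⟩ ⟨w, Finset.mem_of_mem_erase w.2⟩ -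
        Γ.matrix ⟨u, Finset.mem_of_mem_erase u.2⟩ ⟨v, hv⟩ *
          Γ.matrix ⟨v, hv⟩ ⟨w, Finset.mem_of_mem_erase w.2⟩ := by
  obtain ⟨u, hu⟩ := u
  obtain ⟨w, hw⟩ := w
  have huv : u ≠ v := Finset.ne_of_mem_erase hu
  have hwv : w ≠ v := Finset.ne_of_mem_erase hw
  simp only [matrix, lcd, SimpleGraph.lcdel_adj, Finset.mem_symmDiff,
    Finset.mem_erase, Finset.mem_filter, Finset.mem_univ, huv, hwv.symm,
    Γ.G.adj_comm u v]
  by_cases huw : u = w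
  · subst huw
    by_cases hL : u ∈ Γ.L <;> by_cases hvu : Γ.G.Adj v u <;> simp [hL, hvu, huv]
  · by_cases huw' : Γ.G.Adj u w <;> by_cases hvu : Γ.G.Adj v u <;>
      by_cases hvw : Γ.G.Adj v w <;> simp [huw, huw', hvu, hvw, huv, hwv]

theorem rank_matrix_eq_rank_matrix_lcd_add_one (Γ : Graft V) {v : V} (hv : v ∈ Γ.L) :
    Γ.matrix.rank = (Γ.lcd v).matrix.rank + 1 := by
  rw [Γ.matrix.rank_eq_rank_pivot_add_one (Finset.sumEraseEquiv (Γ.L_sub hv))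
    (by simp [Finset.sumEraseEquiv, matrix, hv])]
  congr 2
  ext u w
  exact (Γ.matrix_lcd_apply (Γ.L_sub hv) u w).symm

theorem corank_lcd (Γ : Graft V) {v : V} (hv : v ∈ Γ.L) : (Γ.lcd v).corank = Γ.corank := by
  have hcard : Γ.support.card = (Γ.lcd v).support.card + 1 :=
    (Finset.card_erase_add_one (Γ.L_sub hv)).symm
  rw [corank, corank, hcard, Γ.rank_matrix_eq_rank_matrix_lcd_add_one hv,
    Nat.add_sub_add_right]

end Graft

/-- Proposition 3.1: if `(H, L_H)` is a local complementation minor of `(G, L_G)`,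
then the coranks over GF(2) of their adjacency matrices coincide. -/
theorem corank_eq_of_isLCMinor {V : Type*} [Fintype V] [DecidableEq V]
    (Γ Δ : Graft V) (h : Γ.IsLCMinor Δ) :
    Γ.corank = Δ.corank := by
  induction h with
  | refl => rfl
  | step v hv _ ih => rw [← Graft.corank_lcd _ hv, ih]
end

section
/- Let G be a finite simple graph on at least 2 vertices that is not a path (i.e., G is not isomorphic to the path graph P_n for any n). Then there exists a subset S ⊆ V(G) such that the adjacency matrix A_{(G,S)} of the graft (G, S) has corank at least 2 over GF(2), i.e. rank(A_{(G,S)}) ≤ |V(G)| − 2. -/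
open scoped Classical symmDiff

variable {V : Type*} [Fintype V] [DecidableEq V]

/-!
Pivoting on a marked vertex `v` (a diagonal entry `1`) replaces the graft matrix of `(G, L)` by
its Schur complement, which is the graft matrix of `(G ⊟ v, L')`: local complementation at `v`
toggles exactly the entries of the rank-one correction `N(v) N(v)ᵀ`. Every mark set of `G ⊟ v`
arises this way, so a graft of corank `≥ 2` on `G ⊟ v` lifts to one on `G`, and the theorem
follows by induction once some `G ⊟ v` is not a path.

A disconnected graph needs no induction: marking the vertices of odd degree puts the indicator
of every component into the kernel. For a connected graph on at least three vertices all of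
whose `G ⊟ v` are paths, the structure of paths (maximum degree two, no isolated vertex, an end
of degree one) forces `G` to be a path: a vertex with a non-neighbour `v` keeps its
neighbourhood in `G ⊟ v`, closed twins become isolated, a leaf extends the path `G ⊟ v` at an
end, and a `2`-regular `G` would make every `G ⊟ v` have only even degrees.
-/

open Module LinearMap
open scoped Matrix

namespace Matrix

variable {K ι : Type*} [Field K] [Fintype ι] [DecidableEq ι]

/-- The Schur complement of the pivot `M v v`, assumed to be `1`. -/
def schurComplement (M : Matrix ι ι K) (v : ι) : Matrix {i // i ≠ v} {i // i ≠ v} K :=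
  fun i j => M i j - M i v * M v j

/-- The `v`-coordinate is chosen to make row `v` of `M *ᵥ _` vanish when `M v v = 1`. -/
def pivotExtend (M : Matrix ι ι K) (v : ι) : ({i // i ≠ v} → K) →ₗ[K] (ι → K) where
  toFun x i := if h : i = v then -∑ j : {j // j ≠ v}, M v j * x j else x ⟨i, h⟩
  map_add' x y := by
    ext i
    by_cases h : i = v <;> simp [h, mul_add, Finset.sum_add_distrib, add_comm]
  map_smul' c x := by
    ext i
    by_cases h : i = v <;> simp [h, Finset.mul_sum, mul_left_comm]

theorem pivotExtend_injective (M : Matrix ι ι K) (v : ι) :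
    Function.Injective (M.pivotExtend v) :=
  fun x y hxy => funext fun i => by simpa [pivotExtend, i.2] using congrFun hxy i

theorem mulVec_pivotExtend (M : Matrix ι ι K) (v : ι) (x : {i // i ≠ v} → K) (i : ι) :
    (M *ᵥ M.pivotExtend v x) i = ∑ j : {j // j ≠ v}, (M i j - M i v * M v j) * x j := by
  have hx (j : {j // j ≠ v}) : M.pivotExtend v x j = x j := dif_neg j.2
  simp only [mulVec, dotProduct, Fintype.sum_eq_add_sum_subtype_ne _ v, hx]
  simp only [pivotExtend, coe_mk, AddHom.coe_mk, ↓reduceDIte, mul_neg, Finset.mul_sum, sub_mul,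
    mul_assoc, Finset.sum_sub_distrib]
  ring

theorem pivotExtend_mem_ker {M : Matrix ι ι K} {v : ι} (hv : M v v = 1)
    {x : {i // i ≠ v} → K} (hx : x ∈ ker (M.schurComplement v).mulVecLin) :
    M.pivotExtend v x ∈ ker M.mulVecLin := by
  rw [mem_ker, mulVecLin_apply] at hx ⊢
  ext i
  rw [mulVec_pivotExtend]
  by_cases h : i = v
  · simp [h, hv]
  · exact congrFun hx ⟨i, h⟩

theorem finrank_ker_schurComplement_le (M : Matrix ι ι K) {v : ι} (hv : M v v = 1) :
    finrank K (ker (M.schurComplement v).mulVecLin) ≤ finrank K (ker M.mulVecLin) :=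
  finrank_le_finrank_of_injective
    (f := (M.pivotExtend v).restrict fun _ => pivotExtend_mem_ker hv)
    fun _ _ hxy => Subtype.ext (pivotExtend_injective M v (congrArg Subtype.val hxy))

theorem sum_schurComplement_apply {M : Matrix ι ι K} {v : ι} (hv : M v v = 1)
    (i : {i // i ≠ v}) :
    ∑ j, M.schurComplement v i j = ∑ j, M i j - M i v * ∑ j, M v j := by
  rw [Finset.mul_sum, ← Finset.sum_sub_distrib, Fintype.sum_eq_add_sum_subtype_ne _ v, hv,
    mul_one, sub_self, zero_add]
  rfl

end Matrix

theorem Submodule.two_le_finrank_of_mem {K ι : Type*} [Field K] [Fintype ι]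
    (p : Submodule K (ι → K)) {x y : ι → K} (hx : x ∈ p) (hy : y ∈ p) {a b : ι}
    (hxa : x a ≠ 0) (hxb : x b = 0) (hyb : y b ≠ 0) : 2 ≤ finrank K p := by
  have hli : LinearIndependent K ![(⟨x, hx⟩ : p), ⟨y, hy⟩] := by
    refine LinearIndependent.pair_iff.mpr fun s t hst => ?_
    have ht : t = 0 := by simpa [hxb, hyb] using congrFun (congrArg Subtype.val hst) b
    exact ⟨by simpa [ht, hxa] using congrFun (congrArg Subtype.val hst) a, ht⟩
  simpa using hli.fintype_card_le_finrank

namespace SimpleGraph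

section LocalCompDelete

variable {α : Type*} (G : SimpleGraph α)

/-- `G ⊟ v`: local complementation at `v`, then deletion of `v`. -/
def localCompDelete (v : α) : SimpleGraph {u // u ≠ v} :=
  (G.localComp v).comap Subtype.val

variable {G} {v : α}

theorem localCompDelete_adj {x y : {u // u ≠ v}} :
    (G.localCompDelete v).Adj x y ↔ (x : α) ≠ y ∧
      (G.Adj x y ∧ ¬(G.Adj v x ∧ G.Adj v y) ∨ (G.Adj v x ∧ G.Adj v y) ∧ ¬G.Adj x y) :=
  Iff.rfl

theorem localCompDelete_adj_iff_of_leaf {w : α} (hN : ∀ z, G.Adj v z ↔ z = w)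
    {x y : {z // z ≠ v}} : (G.localCompDelete v).Adj x y ↔ G.Adj x y := by
  rw [localCompDelete_adj, hN, hN]
  have hw : (x : α) = w → (y : α) = w → (x : α) = y := fun hx hy => hx.trans hy.symm
  have : G.Adj x y → (x : α) ≠ y := G.ne_of_adj
  tauto

theorem localCompDelete_adj_iff_of_not_adj {x : {z // z ≠ v}} (hx : ¬G.Adj v x)
    {y : {z // z ≠ v}} : (G.localCompDelete v).Adj x y ↔ G.Adj x y := by
  rw [localCompDelete_adj]
  have : G.Adj x y → (x : α) ≠ y := G.ne_of_adj
  tauto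

/-- Local complementation at `v` toggles exactly the edges at a closed twin `y` of `v`. -/
theorem localCompDelete_not_adj_of_twin {y : α} (hvy : G.Adj v y)
    (htwin : ∀ t, t ≠ v → t ≠ y → (G.Adj v t ↔ G.Adj y t)) (t : {z // z ≠ v}) :
    ¬(G.localCompDelete v).Adj ⟨y, hvy.ne'⟩ t := by
  rw [localCompDelete_adj]
  rintro ⟨hyt, h⟩
  have := htwin t t.2 (Ne.symm hyt)
  tauto

variable [DecidableEq α]

theorem adjMatrix_localCompDelete (x y : {u // u ≠ v}) :
    (G.localCompDelete v).adjMatrix (ZMod 2) x y = if x = y then 0 else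
      G.adjMatrix (ZMod 2) x y + G.adjMatrix (ZMod 2) v x * G.adjMatrix (ZMod 2) v y := by
  by_cases hxy : x = y
  · simp [hxy]
  · have hxy' : (x : α) ≠ y := fun h => hxy (Subtype.ext h)
    simp only [adjMatrix_apply, localCompDelete_adj, if_neg hxy, ne_eq, hxy', not_false_eq_true,
      true_and]
    have h11 : (1 : ZMod 2) + 1 = 0 := rfl
    by_cases h1 : G.Adj x y <;> by_cases h2 : G.Adj v x <;> by_cases h3 : G.Adj v y <;>
      simp [h1, h2, h3, h11]

variable [Fintype α]

theorem degree_localCompDelete {x : {z // z ≠ v}}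
    (hx : ∀ y, (G.localCompDelete v).Adj x y ↔ G.Adj x y) :
    (G.localCompDelete v).degree x = ((G.neighborFinset x).erase v).card := by
  rw [← card_neighborFinset_eq_degree, ← Finset.card_map (Function.Embedding.subtype _)]
  congr 1
  ext y
  simp only [Finset.mem_map, mem_neighborFinset, hx, Function.Embedding.coe_subtype,
    Finset.mem_erase]
  exact ⟨fun ⟨y', hy', hy⟩ => hy ▸ ⟨y'.2, hy'⟩, fun ⟨hy, hxy⟩ => ⟨⟨y, hy⟩, hxy, rfl⟩⟩

end LocalCompDelete

section GraftMatrix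

variable {α : Type*} [DecidableEq α] (G : SimpleGraph α)

/-- The GF(2) adjacency matrix of the graft `(G, {u | d u = 1})`. -/
noncomputable def graftMatrix (d : α → ZMod 2) : Matrix α α (ZMod 2) :=
  G.adjMatrix (ZMod 2) + Matrix.diagonal d

/-- Proposition 3.1 in matrix form: `hd` says that `d'` marks `(L \ {v}) ∆ N(v)`, as in
`Graft.lcd`. -/
theorem graftMatrix_localCompDelete {v : α} {d : α → ZMod 2} (d' : {u // u ≠ v} → ZMod 2)
    (hd : ∀ u : {u // u ≠ v}, d u = d' u + G.adjMatrix (ZMod 2) v u) :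
    (G.localCompDelete v).graftMatrix d' = (G.graftMatrix d).schurComplement v := by
  have hsq (z : ZMod 2) : z * z = z := by fin_cases z <;> rfl
  ext x y
  have hxv : (x : α) ≠ v := x.2
  have hyv : v ≠ (y : α) := Ne.symm y.2
  have hsymm : G.adjMatrix (ZMod 2) x v = G.adjMatrix (ZMod 2) v x := by
    simp only [adjMatrix_apply, adj_comm]
  simp only [graftMatrix, Matrix.schurComplement, Matrix.add_apply, adjMatrix_localCompDelete,
    Matrix.diagonal_apply, Subtype.ext_iff, if_neg hxv, if_neg hyv, add_zero, hsymm]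
  split_ifs with hxy
  · rw [← hxy, hd]
    simp [hsq]
  · rw [CharTwo.sub_eq_add]
    ring

variable [Fintype α]

noncomputable def graftNullity (d : α → ZMod 2) : ℕ :=
  finrank (ZMod 2) (ker (G.graftMatrix d).mulVecLin)

theorem rank_graftMatrix_add_graftNullity (d : α → ZMod 2) :
    (G.graftMatrix d).rank + G.graftNullity d = Fintype.card α := by
  rw [Matrix.rank, graftNullity, finrank_range_add_finrank_ker, finrank_fintype_fun_eq_card]

theorem sum_graftMatrix_apply (d : α → ZMod 2) (x : α) :
    ∑ y, G.graftMatrix d x y = G.degree x + d x := by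
  simp [graftMatrix, Finset.sum_add_distrib, Matrix.diagonal_apply, ← neighborFinset_eq_filter]

theorem exists_graftNullity_ge_of_localCompDelete (v : α) (d' : {u // u ≠ v} → ZMod 2) :
    ∃ d, (G.localCompDelete v).graftNullity d' ≤ G.graftNullity d := by
  let d u := if h : u = v then 1 else d' ⟨u, h⟩ + G.adjMatrix (ZMod 2) v u
  refine ⟨d, ?_⟩
  rw [graftNullity, graftNullity, G.graftMatrix_localCompDelete (d := d) d' fun u => dif_neg u.2]
  exact Matrix.finrank_ker_schurComplement_le _ (by simp [graftMatrix, d])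

/-- For `x ∈ C`, row `x` sums over `C` to `deg x + deg x = 0`; for `x ∉ C` it vanishes on `C`. -/
theorem indicator_mem_ker_graftMatrix_degree {C : Set α}
    (hC : ∀ ⦃x y⦄, G.Adj x y → x ∈ C → y ∈ C) :
    C.indicator 1 ∈ ker (G.graftMatrix fun u => G.degree u).mulVecLin := by
  rw [mem_ker, Matrix.mulVecLin_apply]
  ext x
  rw [graftMatrix, Matrix.add_mulVec, Pi.add_apply, adjMatrix_mulVec_apply,
    Matrix.mulVec_diagonal, Pi.zero_apply]
  by_cases hx : x ∈ C
  · have hN (y) (hy : y ∈ G.neighborFinset x) : C.indicator (1 : α → ZMod 2) y = 1 :=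
      Set.indicator_of_mem (hC ((G.mem_neighborFinset x y).mp hy) hx) _
    rw [Finset.sum_congr rfl hN, Finset.sum_const, card_neighborFinset_eq_degree,
      Set.indicator_of_mem hx, Pi.one_apply, nsmul_eq_mul, mul_one, CharTwo.add_self_eq_zero]
  · have hN (y) (hy : y ∈ G.neighborFinset x) : C.indicator (1 : α → ZMod 2) y = 0 :=
      Set.indicator_of_notMem (fun hy' => hx (hC ((G.mem_neighborFinset x y).mp hy).symm hy')) _
    rw [Finset.sum_congr rfl hN, Finset.sum_const_zero, Set.indicator_of_notMem hx, mul_zero,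
      add_zero]

theorem two_le_graftNullity_of_not_connected [Nonempty α] (h : ¬G.Connected) :
    2 ≤ G.graftNullity fun u => G.degree u := by
  obtain ⟨a, b, hab⟩ : ∃ a b, ¬G.Reachable a b := by
    by_contra! h'
    exact h ⟨fun a b => h' a b⟩
  let C : Set α := {w | G.Reachable a w}
  refine Submodule.two_le_finrank_of_mem _ (a := a) (b := b)
    (G.indicator_mem_ker_graftMatrix_degree (C := C) fun _ _ hxy hx => hx.trans hxy.reachable)
    (G.indicator_mem_ker_graftMatrix_degree (C := Cᶜ) fun _ _ hxy hx hy =>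
      hx (hy.trans hxy.symm.reachable))
    ?_ ?_ ?_ <;> simp [C, hab]

variable {G} {v : α}

theorem degree_localCompDelete_cast (x : {z // z ≠ v}) :
    ((G.localCompDelete v).degree x : ZMod 2) =
      G.degree x + G.adjMatrix (ZMod 2) v x * G.degree v := by
  let d u := if u = v then 1 else G.adjMatrix (ZMod 2) v u
  have hM : (G.localCompDelete v).graftMatrix 0 = (G.graftMatrix d).schurComplement v :=
    G.graftMatrix_localCompDelete 0 fun u => by simp [d, u.2]
  have hMvv : G.graftMatrix d v v = 1 := by simp [graftMatrix, d]
  have hMxv : G.graftMatrix d x v = G.adjMatrix (ZMod 2) v x := by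
    simp [graftMatrix, x.2, adj_comm]
  have hdx : d x = G.adjMatrix (ZMod 2) v x := if_neg x.2
  have key := (G.localCompDelete v).sum_graftMatrix_apply 0 x
  rw [hM, Matrix.sum_schurComplement_apply hMvv, sum_graftMatrix_apply, sum_graftMatrix_apply,
    hMxv, hdx, show d v = 1 from if_pos rfl, Pi.zero_apply, add_zero] at key
  rw [← key]
  ring_nf
  reduce_mod_char

theorem even_degree_localCompDelete (heven : ∀ x, Even (G.degree x)) (x : {z // z ≠ v}) :
    Even ((G.localCompDelete v).degree x) := by
  rw [← ZMod.natCast_eq_zero_iff_even, degree_localCompDelete_cast,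
    (ZMod.natCast_eq_zero_iff_even).mpr (heven x), (ZMod.natCast_eq_zero_iff_even).mpr (heven v),
    mul_zero, add_zero]

end GraftMatrix

section PathGraph

variable {n : ℕ}

theorem pathGraph_degree_le_two (i : Fin n) : (pathGraph n).degree i ≤ 2 := by
  rw [← card_neighborFinset_eq_degree]
  calc ((pathGraph n).neighborFinset i).card ≤ ({(i : ℕ) - 1, (i : ℕ) + 1} : Finset ℕ).card :=
        Finset.card_le_card_of_injOn Fin.val
          (fun j hj => by
            simp only [Finset.coe_insert, Finset.coe_singleton, Set.mem_insert_iff,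
              Set.mem_singleton_iff, Finset.mem_coe, mem_neighborFinset, pathGraph_adj] at hj ⊢
            omega)
          Fin.val_injective.injOn
    _ ≤ 2 := Finset.card_le_two

theorem pathGraph_eq_zero_or_eq_last_of_degree_le_one {i : Fin n}
    (hi : (pathGraph n).degree i ≤ 1) : (i : ℕ) = 0 ∨ (i : ℕ) + 1 = n := by
  by_contra! h
  have hsub : ({⟨i - 1, by omega⟩, ⟨i + 1, by omega⟩} : Finset (Fin n)) ⊆
      (pathGraph n).neighborFinset i := by
    intro j hj
    simp only [Finset.mem_insert, Finset.mem_singleton] at hj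
    rcases hj with rfl | rfl
    · simp only [mem_neighborFinset, pathGraph_adj]
      omega
    · simp [pathGraph_adj]
  have := Finset.card_le_card hsub
  rw [Finset.card_pair (by simp [Fin.ext_iff]), card_neighborFinset_eq_degree] at this
  omega

theorem pathGraph_degree_zero (hn : 2 ≤ n) : (pathGraph n).degree ⟨0, by omega⟩ = 1 := by
  rw [← card_neighborFinset_eq_degree, Finset.card_eq_one]
  refine ⟨⟨1, hn⟩, Finset.ext fun j => ?_⟩
  simp [pathGraph_adj, Fin.ext_iff, eq_comm]

theorem pathGraph_exists_adj (hn : 2 ≤ n) (i : Fin n) : ∃ j, (pathGraph n).Adj i j := by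
  rcases Nat.lt_or_ge (i + 1) n with h | h
  · exact ⟨⟨i + 1, h⟩, by simp [pathGraph_adj]⟩
  · exact ⟨⟨i - 1, by omega⟩, by simp only [pathGraph_adj]; omega⟩

def pathGraphRevIso (n : ℕ) : pathGraph n ≃g pathGraph n where
  toEquiv := Fin.revPerm
  map_rel_iff' {i j} := by
    simp only [Fin.revPerm_apply, pathGraph_adj, Fin.val_rev]
    omega

end PathGraph

section IsPathGraph

variable {α : Type*}

def IsPathGraph (G : SimpleGraph α) : Prop :=
  ∃ n, Nonempty (G ≃g pathGraph n)

theorem isPathGraph_of_attach {G : SimpleGraph α} {u : α} {H : SimpleGraph {z // z ≠ u}}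
    {m : ℕ} (ψ : H ≃g pathGraph m) (hH : ∀ x y, H.Adj x y ↔ G.Adj x y)
    (hu : ∀ x : {z // z ≠ u}, G.Adj u x ↔ (ψ x : ℕ) = 0) : G.IsPathGraph := by
  let e : Fin (m + 1) ≃ α :=
    (finSuccEquiv m).trans ((Equiv.optionCongr ψ.symm.toEquiv).trans (Equiv.optionSubtypeNe u))
  have he0 : e 0 = u := rfl
  have hes (i : Fin m) : e i.succ = ψ.symm i := by simp [e, finSuccEquiv_succ]
  refine ⟨m + 1, ⟨RelIso.symm ⟨e, fun {i j} => ?_⟩⟩⟩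
  have h0s (j : Fin m) : G.Adj (e 0) (e j.succ) ↔ (pathGraph (m + 1)).Adj 0 j.succ := by
    rw [he0, hes, hu, ψ.apply_symm_apply]
    simp [pathGraph_adj]
  induction i using Fin.cases with
  | zero => induction j using Fin.cases with
    | zero => simp
    | succ j => exact h0s j
  | succ i => induction j using Fin.cases with
    | zero => rw [G.adj_comm, (pathGraph _).adj_comm]; exact h0s i
    | succ j =>
      rw [hes, hes, ← hH, ψ.symm.map_adj_iff]
      simp [pathGraph_adj]

variable [Fintype α] {G : SimpleGraph α}

theorem IsPathGraph.nonempty_iso (hG : G.IsPathGraph) :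
    Nonempty (G ≃g pathGraph (Fintype.card α)) := by
  obtain ⟨n, ⟨φ⟩⟩ := hG
  obtain rfl : Fintype.card α = n := by simpa using Fintype.card_congr φ.toEquiv
  exact ⟨φ⟩

theorem IsPathGraph.degree_le_two (hG : G.IsPathGraph) (x : α) : G.degree x ≤ 2 := by
  obtain ⟨φ⟩ := hG.nonempty_iso
  rw [← φ.degree_eq]
  exact pathGraph_degree_le_two _

theorem IsPathGraph.exists_adj (hG : G.IsPathGraph) (h2 : 2 ≤ Fintype.card α) (x : α) :
    ∃ y, G.Adj x y := by
  obtain ⟨φ⟩ := hG.nonempty_iso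
  obtain ⟨j, hj⟩ := pathGraph_exists_adj h2 (φ x)
  exact ⟨φ.symm j, by rwa [← φ.map_adj_iff, φ.apply_symm_apply]⟩

theorem IsPathGraph.exists_odd_degree (hG : G.IsPathGraph) (h2 : 2 ≤ Fintype.card α) :
    ∃ x, Odd (G.degree x) := by
  obtain ⟨φ⟩ := hG.nonempty_iso
  refine ⟨φ.symm ⟨0, by omega⟩, ?_⟩
  rw [← φ.degree_eq, φ.apply_symm_apply, pathGraph_degree_zero h2]
  exact odd_one

theorem IsPathGraph.exists_ne_not_adj (hG : G.IsPathGraph) (h3 : 3 ≤ Fintype.card α) :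
    ∃ x y, x ≠ y ∧ ¬G.Adj x y := by
  obtain ⟨φ⟩ := hG.nonempty_iso
  refine ⟨φ.symm ⟨0, by omega⟩, φ.symm ⟨2, by omega⟩, by simp, ?_⟩
  rw [φ.symm.map_adj_iff]
  simp [pathGraph_adj]

theorem IsPathGraph.of_connected_of_card_eq_two (hconn : G.Connected)
    (h2 : Fintype.card α = 2) : G.IsPathGraph := by
  have : Nontrivial α := Fintype.one_lt_card_iff_nontrivial.mp (by omega)
  let e := Fintype.equivFinOfCardEq h2
  obtain rfl : G = ⊤ := by
    ext x y
    refine ⟨G.ne_of_adj, fun hxy => ?_⟩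
    obtain ⟨w, hw⟩ := hconn.preconnected.exists_adj_of_nontrivial x
    have hwx := e.injective.ne (G.ne_of_adj hw).symm
    have hyx := e.injective.ne (Ne.symm hxy)
    obtain rfl : w = y := e.injective (by simp only [ne_eq, Fin.ext_iff] at hwx hyx; omega)
    exact hw
  refine ⟨2, ⟨?_⟩⟩
  rw [pathGraph_two_eq_top]
  exact Iso.completeGraph e

variable [DecidableEq α]

theorem IsPathGraph.of_localCompDelete_of_leaf {u w : α} (hN : ∀ z, G.Adj u z ↔ z = w)
    (hw : G.degree w ≤ 2) (h : (G.localCompDelete u).IsPathGraph) : G.IsPathGraph := by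
  have huw : G.Adj u w := (hN w).mpr rfl
  let w' : {z // z ≠ u} := ⟨w, huw.ne'⟩
  have hadj (x y : {z // z ≠ u}) := localCompDelete_adj_iff_of_leaf hN (x := x) (y := y)
  obtain ⟨m, ⟨φ⟩⟩ := h
  have hdeg : (pathGraph m).degree (φ w') ≤ 1 := by
    rw [φ.degree_eq, degree_localCompDelete (hadj w'),
      Finset.card_erase_of_mem ((G.mem_neighborFinset _ _).mpr huw.symm),
      card_neighborFinset_eq_degree]
    omega
  -- `w` is an end of the path `G ⊟ u = G - u`; orient the path so that it is the first vertex
  obtain ⟨ψ, hψ⟩ : ∃ ψ : G.localCompDelete u ≃g pathGraph m, (ψ w' : ℕ) = 0 := by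
    rcases pathGraph_eq_zero_or_eq_last_of_degree_le_one hdeg with h | h
    · exact ⟨φ, h⟩
    · refine ⟨φ.trans (pathGraphRevIso m), ?_⟩
      simp only [pathGraphRevIso, RelIso.trans_apply, RelIso.coe_fn_mk, Fin.revPerm_apply,
        Fin.val_rev]
      omega
  refine isPathGraph_of_attach ψ hadj fun x => ?_
  rw [hN, ← hψ, Fin.val_inj, ψ.injective.eq_iff, Subtype.ext_iff]

theorem degree_le_two_of_not_isUniversal (hall : ∀ v, (G.localCompDelete v).IsPathGraph)
    {x : α} (hx : ¬G.IsUniversal x) : G.degree x ≤ 2 := by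
  obtain ⟨v, hxv, hadj⟩ : ∃ v, x ≠ v ∧ ¬G.Adj x v := by simpa [IsUniversal] using hx
  have h := (hall v).degree_le_two ⟨x, hxv⟩
  rwa [degree_localCompDelete fun _ => localCompDelete_adj_iff_of_not_adj (by rwa [adj_comm]),
    Finset.erase_eq_of_notMem (by simpa using hadj), card_neighborFinset_eq_degree] at h

theorem exists_not_twin_of_isPathGraph_localCompDelete {v y : α}
    (hv : (G.localCompDelete v).IsPathGraph) (h3 : 3 ≤ Fintype.card α) (hvy : G.Adj v y) :
    ∃ t, t ≠ v ∧ t ≠ y ∧ ¬(G.Adj v t ↔ G.Adj y t) := by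
  by_contra! htwin
  obtain ⟨t, ht⟩ := hv.exists_adj
    (by rw [Fintype.card_subtype_compl, Fintype.card_subtype_eq]; omega) ⟨y, hvy.ne'⟩
  exact localCompDelete_not_adj_of_twin hvy htwin t ht

theorem IsPathGraph.of_forall_localCompDelete_of_isUniversal {v : α}
    (hall : ∀ x, (G.localCompDelete x).IsPathGraph) (h3 : 3 ≤ Fintype.card α)
    (hv : G.IsUniversal v) : G.IsPathGraph := by
  by_cases huniv : ∃ y, y ≠ v ∧ G.IsUniversal y
  · obtain ⟨y, hyv, hy⟩ := huniv
    obtain ⟨t, htv, hty, ht⟩ :=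
      exists_not_twin_of_isPathGraph_localCompDelete (hall v) h3 (hv hyv.symm)
    exact absurd (iff_of_true (hv htv.symm) (hy hty.symm)) ht
  push Not at huniv
  by_cases hedge : ∃ a b, a ≠ v ∧ b ≠ v ∧ G.Adj a b
  · -- then `N(a) = {v, b}` and `N(b) = {v, a}`, so `a` and `b` are closed twins
    obtain ⟨a, b, hav, hbv, hab⟩ := hedge
    have hN (x y : α) (hxv : x ≠ v) (hyv : y ≠ v) (hxy : G.Adj x y) :
        G.neighborFinset x = {v, y} := by
      refine (Finset.eq_of_subset_of_card_le ?_ ?_).symm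
      · simp [Finset.insert_subset_iff, (hv hxv.symm).symm, hxy]
      · rw [Finset.card_pair hyv.symm, card_neighborFinset_eq_degree]
        exact degree_le_two_of_not_isUniversal hall (huniv x hxv)
    obtain ⟨t, hta, htb, ht⟩ := exists_not_twin_of_isPathGraph_localCompDelete (hall a) h3 hab
    rw [← mem_neighborFinset, ← mem_neighborFinset, hN a b hav hbv hab,
      hN b a hbv hav hab.symm] at ht
    simp [hta, htb] at ht
  push Not at hedge
  obtain ⟨a, hav⟩ := Fintype.exists_ne_of_one_lt_card (by omega) v
  by_cases hcard : Fintype.card α = 3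
  · -- `G` is the path `a - v - b` on three vertices
    refine (hall a).of_localCompDelete_of_leaf (w := v) (fun z => ⟨fun h => ?_, ?_⟩) ?_
    · by_contra hzv
      exact hedge a z hav hzv h
    · rintro rfl
      exact (hv hav.symm).symm
    · rw [(degree_eq_card_sub_one G v).mpr hv, hcard]
  · -- `G ⊟ v` is complete on at least three vertices
    obtain ⟨x, y, hxy, hnadj⟩ := (hall v).exists_ne_not_adj
      (by rw [Fintype.card_subtype_compl, Fintype.card_subtype_eq]; omega)
    refine absurd ?_ hnadj
    rw [localCompDelete_adj]
    exact ⟨fun h => hxy (Subtype.ext h),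
      Or.inr ⟨⟨hv (Ne.symm x.2), hv (Ne.symm y.2)⟩, hedge x y x.2 y.2⟩⟩

theorem IsPathGraph.of_forall_localCompDelete_of_forall_not_isUniversal (hconn : G.Connected)
    (h3 : 3 ≤ Fintype.card α) (hall : ∀ x, (G.localCompDelete x).IsPathGraph)
    (hnu : ∀ x, ¬G.IsUniversal x) : G.IsPathGraph := by
  have hsmall (x : α) : G.degree x ≤ 2 := degree_le_two_of_not_isUniversal hall (hnu x)
  by_cases hleaf : ∃ u w, ∀ z, G.Adj u z ↔ z = w
  · obtain ⟨u, w, hN⟩ := hleaf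
    exact (hall u).of_localCompDelete_of_leaf hN (hsmall w)
  -- otherwise `G` is `2`-regular, but every `G ⊟ v` has an end of odd degree
  have : Nontrivial α := Fintype.one_lt_card_iff_nontrivial.mp (by omega)
  have heven (x : α) : Even (G.degree x) := by
    have hpos : 0 < G.degree x := (G.degree_pos x).mpr (hconn.preconnected.not_isIsolated x)
    have hne : G.degree x ≠ 1 := fun h1 => by
      obtain ⟨w, hw⟩ := Finset.card_eq_one.mp h1
      exact hleaf ⟨x, w, fun z => by rw [← mem_neighborFinset, hw, Finset.mem_singleton]⟩
    rw [show G.degree x = 2 by have := hsmall x; omega]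
    exact even_two
  obtain ⟨v⟩ := hconn.nonempty
  obtain ⟨x, hx⟩ := (hall v).exists_odd_degree
    (by rw [Fintype.card_subtype_compl, Fintype.card_subtype_eq]; omega)
  exact absurd (even_degree_localCompDelete heven x) (Nat.not_even_iff_odd.mpr hx)

theorem IsPathGraph.of_forall_localCompDelete (hconn : G.Connected) (h3 : 3 ≤ Fintype.card α)
    (hall : ∀ v, (G.localCompDelete v).IsPathGraph) : G.IsPathGraph := by
  by_cases h : ∃ v, G.IsUniversal v
  · obtain ⟨v, hv⟩ := h
    exact of_forall_localCompDelete_of_isUniversal hall h3 hv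
  · push Not at h
    exact of_forall_localCompDelete_of_forall_not_isUniversal hconn h3 hall h

end IsPathGraph

theorem exists_two_le_graftNullity {α : Type*} [Fintype α] [DecidableEq α] (G : SimpleGraph α)
    (h2 : 2 ≤ Fintype.card α) (hG : ¬G.IsPathGraph) : ∃ d, 2 ≤ G.graftNullity d := by
  induction hn : Fintype.card α using Nat.strong_induction_on generalizing α with
  | _ n ih =>
  by_cases hconn : G.Connected
  swap
  · have : Nonempty α := Fintype.card_pos_iff.mp (by omega)
    exact ⟨_, G.two_le_graftNullity_of_not_connected hconn⟩
  have h3 : 3 ≤ n := by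
    by_contra! h
    exact hG (.of_connected_of_card_eq_two hconn (by omega))
  obtain ⟨v, hv⟩ : ∃ v, ¬(G.localCompDelete v).IsPathGraph := by
    by_contra! hall
    exact hG (.of_forall_localCompDelete hconn (by omega) hall)
  have hcard : Fintype.card {z // z ≠ v} = n - 1 := by
    rw [Fintype.card_subtype_compl, Fintype.card_subtype_eq, hn]
  obtain ⟨d', hd'⟩ := ih (n - 1) (by omega) (G.localCompDelete v) (by omega) hv hcard
  obtain ⟨d, hd⟩ := G.exists_graftNullity_ge_of_localCompDelete v d'
  exact ⟨d, hd'.trans hd⟩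

end SimpleGraph

theorem Graft.matrix_mk_univ {α : Type*} [Fintype α] [DecidableEq α] (G : SimpleGraph α)
    (S : Finset α) :
    (Graft.mk Finset.univ G (fun u _ _ => Finset.mem_univ u) S (Finset.subset_univ S)).matrix =
      (G.graftMatrix fun u => if u ∈ S then 1 else 0).submatrix
        (Equiv.subtypeUnivEquiv Finset.mem_univ) (Equiv.subtypeUnivEquiv Finset.mem_univ) := by
  ext u w
  by_cases huw : (u : α) = w
  · obtain rfl : u = w := Subtype.ext huw
    simp [Graft.matrix, SimpleGraph.graftMatrix]
  · simp [Graft.matrix, SimpleGraph.graftMatrix, huw]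

/-- If `G` is a finite simple graph on at least two vertices that is not a path
(not isomorphic to any path graph `P_n`), then there is a mark set `S` such that
the adjacency matrix over GF(2) of the graft `(G, S)` has corank at least `2`,
i.e. its rank is at most `|V(G)| - 2`. -/
theorem exists_markSet_rank_le {V : Type*} [Fintype V] [DecidableEq V]
    (G : SimpleGraph V) (hcard : 2 ≤ Fintype.card V)
    (hnp : ¬ ∃ n, Nonempty (G ≃g SimpleGraph.pathGraph n)) :
    ∃ S : Finset V,
      (Graft.mk Finset.univ G (fun u _ _ => Finset.mem_univ u) S
        (Finset.subset_univ S)).matrix.rank ≤ Fintype.card V - 2 := by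
  obtain ⟨d, hd⟩ := G.exists_two_le_graftNullity hcard hnp
  have hd01 : (fun u => if u ∈ Finset.univ.filter (d · = 1) then 1 else 0) = d := by
    funext u
    simp only [Finset.mem_filter, Finset.mem_univ, true_and]
    generalize d u = z
    fin_cases z <;> rfl
  refine ⟨Finset.univ.filter (d · = 1), ?_⟩
  rw [Graft.matrix_mk_univ, Matrix.rank_submatrix, hd01]
  have := G.rank_graftMatrix_add_graftNullity d
  omega
end
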